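/- Top-j average formula for CVaR with uniform probabilities: let p_i = 1/N for all i and α = j/N for an integer 1 ≤ j ≤ N. Then for every X : {1,…,N} → ℝ, CVaR_{j/N}(X) = (1/(N·j)) · max{ Σ_{i∈J} (−X(i)) : J ⊆ {1,…,N}, |J| = j }; that is, the maximum over the generating measures Q_{j/N} is attained at a uniform measure supported on j indices where −X is largest. -/

import Mathlib

/-!
The objective `q ↦ ∑ qᵢ yᵢ` (with `y = -X`) is linear, and `Q_{j/N}` is the set of probability
vectors with weights at most `1/j`. Take a `j`-set `J` maximizing `∑_{i∈J} yᵢ`; swapping one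
element in and out shows that `J` lies above a threshold `t` and its complement below it. Then
`∑ qᵢ yᵢ - (1/j) ∑_{i∈J} yᵢ = ∑ᵢ (qᵢ - 1_J(i)/j) (yᵢ - t)`, because both weight vectors have
mass `1`, and every term is `≤ 0`: the uniform measure on `J` is optimal.
-/

open Finset

/-- Family of generating measures of `CVaR_α` on the finite probability space
`{1,…,N}` with probability vector `p`. -/
def Qset (N : ℕ) (p : Fin N → ℝ) (α : ℝ) : Set (Fin N → ℝ) :=
  {q | (∀ i, 0 ≤ q i) ∧ (∑ i, q i = 1) ∧ ∀ i, q i ≤ p i / α}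

/-- Conditional Value at Risk of a random variable `X : {1,…,N} → ℝ`,
`CVaR_α(X) = max_{q ∈ Q_α} (1/N) ∑ᵢ -qᵢ X(i)`. -/
noncomputable def CVaR (N : ℕ) (p : Fin N → ℝ) (α : ℝ) (X : Fin N → ℝ) : ℝ :=
  sSup ((fun q : Fin N → ℝ => (1 / (N : ℝ)) * ∑ i, (-q i) * X i) '' Qset N p α)

namespace Finset

variable {ι : Type*}

theorem apply_le_apply_of_sum_maximal [DecidableEq ι] {J : Finset ι} {y : ι → ℝ}
    (hmax : ∀ J' : Finset ι, J'.card = J.card → ∑ i ∈ J', y i ≤ ∑ i ∈ J, y i)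
    {i k : ι} (hi : i ∉ J) (hk : k ∈ J) : y i ≤ y k := by
  have hi' : i ∉ J.erase k := fun h => hi (mem_of_mem_erase h)
  have hswap := hmax (insert i (J.erase k)) (by
    rw [card_insert_of_notMem hi', card_erase_of_mem hk]
    have := card_pos.mpr ⟨k, hk⟩
    omega)
  rw [sum_insert hi', ← sum_erase_add J y hk] at hswap
  linarith

theorem sum_mul_le_of_threshold [Fintype ι] [DecidableEq ι] {J : Finset ι} {y q : ι → ℝ}
    {c t : ℝ} (hbelow : ∀ i ∉ J, y i ≤ t) (habove : ∀ k ∈ J, t ≤ y k)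
    (hq0 : ∀ i, 0 ≤ q i) (hqc : ∀ i, q i ≤ c) (hmass : ∑ i, q i = c * J.card) :
    ∑ i, q i * y i ≤ c * ∑ i ∈ J, y i := by
  have hterm : ∀ i, (q i - if i ∈ J then c else 0) * (y i - t) ≤ 0 := by
    intro i
    by_cases hi : i ∈ J
    · simp only [hi, if_true]
      exact mul_nonpos_of_nonpos_of_nonneg (by linarith [hqc i]) (by linarith [habove i hi])
    · simp only [hi, if_false, sub_zero]
      exact mul_nonpos_of_nonneg_of_nonpos (hq0 i) (by linarith [hbelow i hi])
  have hexpand : ∑ i, (q i - if i ∈ J then c else 0) * (y i - t) =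
      ∑ i, q i * y i - c * ∑ i ∈ J, y i - t * (∑ i, q i - c * J.card) := by
    simp only [sub_mul, mul_sub, sum_sub_distrib, ite_mul, zero_mul, sum_ite_mem, univ_inter,
      ← mul_sum, sum_const, nsmul_eq_mul, ← sum_mul]
    ring
  have := sum_nonpos fun i (_ : i ∈ univ) => hterm i
  rw [hexpand, hmass] at this
  linarith

end Finset

def cappedSimplex (ι : Type*) [Fintype ι] (c : ℝ) : Set (ι → ℝ) :=
  {q | (∀ i, 0 ≤ q i) ∧ ∑ i, q i = 1 ∧ ∀ i, q i ≤ c}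

theorem isGreatest_sum_mul_cappedSimplex {ι : Type*} [Fintype ι] [DecidableEq ι]
    {J : Finset ι} (hJ : J.Nonempty) {y : ι → ℝ}
    (hmax : ∀ J' : Finset ι, J'.card = J.card → ∑ i ∈ J', y i ≤ ∑ i ∈ J, y i) :
    IsGreatest ((fun q => ∑ i, q i * y i) '' cappedSimplex ι (1 / J.card))
      (1 / J.card * ∑ i ∈ J, y i) := by
  have hcard : (J.card : ℝ) ≠ 0 := by exact_mod_cast hJ.card_pos.ne'
  refine ⟨⟨fun i => if i ∈ J then 1 / J.card else 0, ⟨fun i => ?_, ?_, fun i => ?_⟩, ?_⟩, ?_⟩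
  · dsimp only
    split_ifs <;> positivity
  · rw [sum_ite_mem, univ_inter, sum_const, nsmul_eq_mul]
    field_simp
  · dsimp only
    split_ifs <;> simp
  · simp only [ite_mul, zero_mul, sum_ite_mem, univ_inter, mul_sum]
  · rintro _ ⟨q, ⟨hq0, hq1, hqc⟩, rfl⟩
    refine sum_mul_le_of_threshold (t := J.inf' hJ y)
      (fun i hi => ?_) (fun k hk => inf'_le y hk) hq0 hqc (by rw [hq1]; field_simp)
    obtain ⟨k, hk, hk_eq⟩ := exists_mem_eq_inf' hJ y
    exact hk_eq ▸ apply_le_apply_of_sum_maximal hmax hi hk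

theorem Qset_uniform {N : ℕ} (hN : N ≠ 0) (j : ℕ) :
    Qset N (fun _ => 1 / (N : ℝ)) ((j : ℝ) / N) = cappedSimplex (Fin N) (1 / j) := by
  have h : 1 / (N : ℝ) / ((j : ℝ) / N) = 1 / j := by field_simp
  simp only [Qset, cappedSimplex, h]

theorem cvar_uniform_top_j_average_general
    (N j : ℕ) (hj : 1 ≤ j) (hjN : j ≤ N)
    (X : Fin N → ℝ) :
    CVaR N (fun _ => 1 / (N : ℝ)) ((j : ℝ) / N) X =
      (1 / ((N : ℝ) * j)) *
        sSup {s : ℝ | ∃ J : Finset (Fin N), J.card = j ∧ s = ∑ i ∈ J, -X i} := by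
  obtain ⟨J, hJmem, hJmax⟩ := exists_max_image (powersetCard j univ) (fun J => ∑ i ∈ J, -X i)
    (powersetCard_nonempty.mpr (by simpa using hjN))
  have hJcard : J.card = j := (mem_powersetCard.mp hJmem).2
  have hmax : ∀ J' : Finset (Fin N), J'.card = J.card → ∑ i ∈ J', -X i ≤ ∑ i ∈ J, -X i :=
    fun J' hJ' => hJmax J' (mem_powersetCard.mpr ⟨subset_univ _, hJ'.trans hJcard⟩)
  have htop : sSup {s : ℝ | ∃ J : Finset (Fin N), J.card = j ∧ s = ∑ i ∈ J, -X i} =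
      ∑ i ∈ J, -X i :=
    IsGreatest.csSup_eq ⟨⟨J, hJcard, rfl⟩, by
      rintro _ ⟨J', hJ', rfl⟩
      exact hmax J' (hJ'.trans hJcard.symm)⟩
  have hweighted := isGreatest_sum_mul_cappedSimplex (card_pos.mp (by omega))
    (y := fun i => -X i) hmax
  rw [hJcard] at hweighted
  have hscaled := (monotone_mul_left_of_nonneg (by positivity : (0 : ℝ) ≤ 1 / N)).map_isGreatest
    hweighted
  rw [Set.image_image] at hscaled
  have hobjective : (fun q : Fin N → ℝ => 1 / (N : ℝ) * ∑ i, -q i * X i) =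
      fun q => 1 / (N : ℝ) * ∑ i, q i * -X i := by
    simp only [mul_neg, neg_mul]
  rw [CVaR, Qset_uniform (by omega), hobjective, hscaled.csSup_eq, htop]
  ring

/-- Top-`j` average formula for CVaR with uniform probabilities:
`CVaR_{j/N}(X) = (1/(N·j)) · max { ∑_{i ∈ J} (-X i) : |J| = j }`. -/
theorem cvar_uniform_top_j_average
    (N j : ℕ) (hN : 1 ≤ N) (hj : 1 ≤ j) (hjN : j ≤ N)
    (X : Fin N → ℝ) :
    CVaR N (fun _ => 1 / (N : ℝ)) ((j : ℝ) / N) X =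
      (1 / ((N : ℝ) * j)) *
        sSup {s : ℝ | ∃ J : Finset (Fin N), J.card = j ∧ s = ∑ i ∈ J, -X i} :=
  cvar_uniform_top_j_average_general N j hj hjN X
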